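/- arXiv:2405.18877 — 2 statements merged into one kernel-verified Lean document; each statement's English description precedes it below -/
import Mathlib

section
/- For a symmetric positive semidefinite matrix L̂ ∈ ℝ^{N×N}, a matrix X ∈ ℝ^{N×F}, and a weight matrix W ∈ ℝ^{F×F'}, the Dirichlet energy E(X) := tr(Xᵀ L̂ X) satisfies E(XW) ≤ ‖Wᵀ‖₂² · E(X), where ‖Wᵀ‖₂ is the largest singular value of W. -/
open Matrix
open scoped Matrix.Norms.L2Operator

/-! Factor `L̂ = Rᵀ R`. Then `E(X) = tr((RX)ᵀ(RX))` is the sum of the squared Euclidean norms of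
the rows of `RX`, and the rows of `RXW` are those of `RX` multiplied by `Wᵀ`, each of which
stretches a row by at most `‖Wᵀ‖₂`. -/

namespace Matrix

variable {m k l : Type*} [Fintype m] [Fintype k] [Fintype l]

open scoped ComplexOrder MatrixOrder in
theorem PosSemidef.exists_eq_conjTranspose_mul_self [DecidableEq m] {𝕜 : Type*} [RCLike 𝕜]
    {A : Matrix m m 𝕜} (hA : A.PosSemidef) : ∃ B : Matrix m m 𝕜, A = Bᴴ * B :=
  ⟨CFC.sqrt A, by
    rw [← star_eq_conjTranspose, (CFC.sqrt_nonneg A).isSelfAdjoint.star_eq,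
      CFC.sqrt_mul_sqrt_self A hA.nonneg]⟩

theorem trace_transpose_mul_self_eq_sum_norm_sq (B : Matrix m k ℝ) :
    (Bᵀ * B).trace = ∑ i, ‖(EuclideanSpace.equiv k ℝ).symm (B i)‖ ^ 2 := by
  simp only [EuclideanSpace.norm_sq_eq]
  simp only [trace, diag_apply, mul_apply, transpose_apply,
    PiLp.continuousLinearEquiv_symm_apply, Real.norm_eq_abs, sq, abs_mul_abs_self]
  exact Finset.sum_comm

theorem trace_transpose_mul_self_mul_le [DecidableEq k] (B : Matrix m k ℝ) (W : Matrix k l ℝ) :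
    ((B * W)ᵀ * (B * W)).trace ≤ ‖Wᵀ‖ ^ 2 * (Bᵀ * B).trace := by
  simp only [trace_transpose_mul_self_eq_sum_norm_sq, Finset.mul_sum, ← mul_pow]
  gcongr with i
  rw [mul_apply_eq_vecMul, ← mulVec_transpose]
  exact l2_opNorm_mulVec Wᵀ _

end Matrix

/-- for symmetric PSD `L̂`, the Dirichlet energy `E(X) = tr(Xᵀ L̂ X)`
satisfies `E(XW) ≤ ‖Wᵀ‖₂² ⬝ E(X)`, with `‖·‖` the spectral (L2 operator) norm. -/
theorem dirichlet_energy_weight_bound {n F F' : ℕ}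
    (L : Matrix (Fin n) (Fin n) ℝ) (hL : L.PosSemidef)
    (X : Matrix (Fin n) (Fin F) ℝ) (W : Matrix (Fin F) (Fin F') ℝ) :
    Matrix.trace ((X * W)ᵀ * L * (X * W)) ≤ ‖Wᵀ‖ ^ 2 * Matrix.trace (Xᵀ * L * X) := by
  obtain ⟨R, rfl⟩ := hL.exists_eq_conjTranspose_mul_self
  have energy_eq {p : ℕ} (Y : Matrix (Fin n) (Fin p) ℝ) :
      Yᵀ * (Rᴴ * R) * Y = (R * Y)ᵀ * (R * Y) := by
    simp only [conjTranspose_eq_transpose_of_trivial, transpose_mul, Matrix.mul_assoc]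
  rw [energy_eq, energy_eq, ← Matrix.mul_assoc R X W]
  exact trace_transpose_mul_self_mul_le (R * X) W
end

section
/- Applying ReLU entrywise does not increase the Dirichlet energy associated with a normalized graph Laplacian: for L̂ = I - D^{-1/2} A D^{-1/2} with A having nonnegative entries and D the degree matrix, and X ∈ ℝ^{N×F}, we have tr(σ(X)ᵀ L̂ σ(X)) ≤ tr(Xᵀ L̂ X), where σ(x) = max(x, 0) entrywise. -/
open Matrix

private lemma relu_sq (u v : ℝ) : (max u 0 - max v 0)^2 ≤ (u - v)^2 := by
  have h := abs_max_sub_max_le_abs u v 0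
  calc (max u 0 - max v 0)^2 = |max u 0 - max v 0|^2 := (sq_abs _).symm
    _ ≤ |u - v|^2 := pow_le_pow_left₀ (abs_nonneg _) h 2
    _ = (u - v)^2 := sq_abs _

private lemma quad_expand {n : ℕ} (A : Matrix (Fin n) (Fin n) ℝ) (hA : A.IsSymm)
    (hdeg : ∀ i, 0 < ∑ j, A i j) (x : Fin n → ℝ) :
    ∑ i, ∑ j, x i * ((1 - Matrix.diagonal (fun i => (Real.sqrt (∑ j, A i j))⁻¹) * A *
        Matrix.diagonal (fun i => (Real.sqrt (∑ j, A i j))⁻¹)) i j) * x j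
      = (1/2) * ∑ i, ∑ j, A i j *
        ((Real.sqrt (∑ k, A i k))⁻¹ * x i - (Real.sqrt (∑ k, A j k))⁻¹ * x j)^2 := by
  set c : Fin n → ℝ := fun i => (Real.sqrt (∑ j, A i j))⁻¹ with hc
  have hc2 : ∀ i, c i ^ 2 * (∑ j, A i j) = 1 := by
    intro i
    have h := (hdeg i).le
    have : c i ^ 2 = (∑ j, A i j)⁻¹ := by
      rw [hc]; simp only [inv_pow]; rw [Real.sq_sqrt h]
    rw [this, inv_mul_cancel₀ (hdeg i).ne']
  have hL : ∀ i j, (1 - Matrix.diagonal c * A * Matrix.diagonal c) i j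
      = (if i = j then 1 else 0) - c i * A i j * c j := by
    intro i j
    simp [Matrix.sub_apply, Matrix.one_apply, Matrix.diagonal_mul, Matrix.mul_diagonal,
      mul_comm, mul_assoc, mul_left_comm]
  have hsym : ∀ i j, A j i = A i j := fun i j => congrFun (congrFun hA i) j
  have S1 : ∑ i, ∑ j, A i j * (c i * x i)^2 = ∑ i, x i ^ 2 := by
    refine Finset.sum_congr rfl fun i _ => ?_
    rw [← Finset.sum_mul]
    have : (c i * x i)^2 = c i ^2 * x i ^2 := by ring
    rw [this, ← mul_assoc, mul_comm (∑ j, A i j) (c i ^2), hc2 i, one_mul]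
  have S2 : ∑ i, ∑ j, A i j * (c j * x j)^2 = ∑ i, x i ^ 2 := by
    rw [Finset.sum_comm]
    rw [← S1]
    refine Finset.sum_congr rfl fun j _ => Finset.sum_congr rfl fun i _ => ?_
    rw [hsym]
  calc ∑ i, ∑ j, x i * ((1 - Matrix.diagonal c * A * Matrix.diagonal c) i j) * x j
      = ∑ i, ∑ j, ((if i = j then x i * x j else 0)
          - A i j * ((c i * x i) * (c j * x j))) := by
        refine Finset.sum_congr rfl fun i _ => Finset.sum_congr rfl fun j _ => ?_
        rw [hL]
        by_cases h : i = j <;> simp [h] <;> ring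
    _ = (∑ i, x i ^ 2) - ∑ i, ∑ j, A i j * ((c i * x i) * (c j * x j)) := by
        simp only [Finset.sum_sub_distrib]
        congr 1
        refine Finset.sum_congr rfl fun i _ => ?_
        simp [sq]
    _ = (1/2) * ∑ i, ∑ j, A i j * ((c i * x i) - (c j * x j))^2 := by
        have expand : ∀ i j, A i j * ((c i * x i) - (c j * x j))^2
            = A i j * (c i * x i)^2 + A i j * (c j * x j)^2
              - 2 * (A i j * ((c i * x i) * (c j * x j))) := by
          intro i j; ring
        simp only [expand, Finset.sum_sub_distrib, Finset.sum_add_distrib,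
          ← Finset.mul_sum, S1, S2]
        ring

/-- entrywise ReLU does not increase the Dirichlet energy of the
symmetric normalized Laplacian `L̂ = I - D^{-1/2} A D^{-1/2}`:
`tr(σ(X)ᵀ L̂ σ(X)) ≤ tr(Xᵀ L̂ X)` for `σ(x) = max x 0`. -/
theorem relu_dirichlet_energy_nonincreasing {n F : ℕ}
    (A : Matrix (Fin n) (Fin n) ℝ) (hA : A.IsSymm)
    (hA0 : ∀ i j, 0 ≤ A i j)
    (hdeg : ∀ i, 0 < ∑ j, A i j)
    (X : Matrix (Fin n) (Fin F) ℝ) :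
    let Dinv : Matrix (Fin n) (Fin n) ℝ :=
      Matrix.diagonal fun i => (Real.sqrt (∑ j, A i j))⁻¹
    let Lhat : Matrix (Fin n) (Fin n) ℝ := 1 - Dinv * A * Dinv
    let Xr : Matrix (Fin n) (Fin F) ℝ := X.map fun x => max x 0
    Matrix.trace (Xrᵀ * Lhat * Xr) ≤ Matrix.trace (Xᵀ * Lhat * X) := by
  intro Dinv Lhat Xr
  set c : Fin n → ℝ := fun i => (Real.sqrt (∑ j, A i j))⁻¹ with hc
  have hcnn : ∀ i, 0 ≤ c i := fun i => inv_nonneg.mpr (Real.sqrt_nonneg _)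
  have htr : ∀ Y : Matrix (Fin n) (Fin F) ℝ,
      Matrix.trace (Yᵀ * Lhat * Y) = ∑ f, ∑ i, ∑ j, (fun k => Y k f) i * Lhat i j * (fun k => Y k f) j := by
    intro Y
    simp only [Matrix.trace, Matrix.diag, Matrix.mul_apply, Matrix.transpose_apply,
      Finset.sum_mul]
    exact Finset.sum_congr rfl fun f _ => Finset.sum_comm
  have key : ∀ x y : Fin n → ℝ, (∀ k, y k = max (x k) 0) →
      ∑ i, ∑ j, y i * Lhat i j * y j ≤ ∑ i, ∑ j, x i * Lhat i j * x j := by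
    intro x y hy
    have hLhat : Lhat = 1 - Matrix.diagonal (fun i => (Real.sqrt (∑ j, A i j))⁻¹) * A *
        Matrix.diagonal (fun i => (Real.sqrt (∑ j, A i j))⁻¹) := rfl
    rw [hLhat, quad_expand A hA hdeg y, quad_expand A hA hdeg x]
    have hhalf : (0:ℝ) ≤ 1/2 := by norm_num
    refine mul_le_mul_of_nonneg_left ?_ hhalf
    refine Finset.sum_le_sum fun i _ => Finset.sum_le_sum fun j _ => ?_
    refine mul_le_mul_of_nonneg_left ?_ (hA0 i j)
    rw [hy i, hy j]
    have m1 : (Real.sqrt (∑ k, A i k))⁻¹ * max (x i) 0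
        = max ((Real.sqrt (∑ k, A i k))⁻¹ * x i) 0 := by
      rw [mul_max_of_nonneg _ _ (hcnn i), mul_zero]
    have m2 : (Real.sqrt (∑ k, A j k))⁻¹ * max (x j) 0
        = max ((Real.sqrt (∑ k, A j k))⁻¹ * x j) 0 := by
      rw [mul_max_of_nonneg _ _ (hcnn j), mul_zero]
    rw [m1, m2]
    exact relu_sq _ _
  rw [htr, htr]
  refine Finset.sum_le_sum fun f _ => key (fun k => X k f) (fun k => Xr k f) fun k => rfl
end
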